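/- Let k, p be positive integers, F analytic at 0, and define (J₂F)(x) = (−1)^{p+k} F(−x). If φ_F(x; ε, η) denotes the solution of d(y²)/dx = −2k x^{2k−1} A_F(εx) − ε^{p} y x^{p+k−1} B_F(εx) on [0, η] that vanishes at x = η (as given by the preceding corollary), then the function y₂(x) = φ_{J₂F}(−x; ε, η), defined for x ∈ [−η, 0], is a solution of the same equation d(y²)/dx = −2k x^{2k−1} A_F(εx) − ε^{p} y x^{p+k−1} B_F(εx); moreover y₂(−η) = 0 and y₂(x) = (η^{2k} − x^{2k})^{1/2} + O(ε). -/

import Mathlib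

/-!
The reflection part is a symmetry computation: `A_{J₂F}(-z) = A_F(z)` and
`B_{J₂F}(-z) = (-1)^{p+k} B_F(z)`, and the signs that `x^{2k-1}` and `x^{p+k-1}` pick up under
`x ↦ -x` cancel the sign produced by the chain rule.

For the estimate, the right-hand side differs from `-2k x^{2k-1}` by `O(ε)(1 + y)`, so by the mean
value theorem `φ² - (η^{2k} - x^{2k})`, which vanishes at `x = η`, is `O(ε)(1 + sup φ)(η - x)`.
This bounds `sup φ` a priori, hence `|φ² - h| ≤ Cε(η - x)` with `h = η^{2k} - x^{2k}`. As
`h ≥ (1 - η₀)^{2k-1}(η - x)`, dividing by `φ + √h ≥ √h` gives `|φ - √h| = O(ε)`.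
-/

/-- `A_G(z) = 1 + z^(2p) G(z)²`. -/
noncomputable def AfunR (p : ℕ) (G : ℝ → ℝ) (z : ℝ) : ℝ :=
  1 + z ^ (2 * p) * (G z) ^ 2

/-- `B_G(z) = 2 z G′(z) + 2(p+2k) G(z)`. -/
noncomputable def BfunR (k p : ℕ) (G : ℝ → ℝ) (z : ℝ) : ℝ :=
  2 * z * deriv G z + 2 * ((p : ℝ) + 2 * k) * G z

/-- `(J₂G)(x) = (−1)^(p+k) G(−x)`. -/
noncomputable def J2 (k p : ℕ) (G : ℝ → ℝ) : ℝ → ℝ :=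
  fun x => (-1 : ℝ) ^ (p + k) * G (-x)

/-- `φ` is the family of "first quadrant" solutions for the vector field
built from `G`: for all admissible `(ε,η)`, `x ↦ φ x ε η` is the
nonnegative solution on `[0,η]` of `d(y²)/dx = −2k x^(2k−1) A_G(εx) −
ε^p y x^(p+k−1) B_G(εx)` vanishing at `x = η` (and positive on `[0,η)` for
`ε = 0`). -/
def SolFam (k p : ℕ) (G : ℝ → ℝ) (ε₀ η₀ : ℝ) (φ : ℝ → ℝ → ℝ → ℝ) : Prop :=
  ∀ ε η : ℝ, |ε| < ε₀ → η ∈ Set.Ioo (1 - η₀) (1 + η₀) →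
    φ η ε η = 0 ∧
    (∀ x ∈ Set.Icc (0:ℝ) η, 0 ≤ φ x ε η) ∧
    (ε = 0 → ∀ x ∈ Set.Ico (0:ℝ) η, 0 < φ x ε η) ∧
    (∀ x ∈ Set.Icc (0:ℝ) η,
      HasDerivWithinAt (fun t => (φ t ε η) ^ 2)
        (-2 * k * x ^ (2 * k - 1) * AfunR p G (ε * x)
          - ε ^ p * φ x ε η * x ^ (p + k - 1) * BfunR k p G (ε * x))
        (Set.Icc 0 η) x)

open Set

noncomputable def odeRhs (k p : ℕ) (G : ℝ → ℝ) (ε x y : ℝ) : ℝ :=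
  -2 * k * x ^ (2 * k - 1) * AfunR p G (ε * x) - ε ^ p * y * x ^ (p + k - 1) * BfunR k p G (ε * x)

lemma AfunR_J2_neg (k p : ℕ) (F : ℝ → ℝ) (z : ℝ) :
    AfunR p (J2 k p F) (-z) = AfunR p F z := by
  unfold AfunR J2
  rw [(even_two_mul p).neg_pow, neg_neg, mul_pow, ← pow_mul,
    Even.neg_one_pow ⟨p + k, by ring⟩, one_mul]

lemma BfunR_J2_neg (k p : ℕ) (F : ℝ → ℝ) (z : ℝ) :
    BfunR k p (J2 k p F) (-z) = (-1) ^ (p + k) * BfunR k p F z := by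
  have hd : deriv (J2 k p F) (-z) = (-1) ^ (p + k) * -deriv F z := by
    unfold J2
    rw [deriv_const_mul_field, deriv_comp_neg, neg_neg]
  simp only [BfunR, hd, J2, neg_neg]
  ring

lemma odeRhs_J2_neg {k : ℕ} (hk : 1 ≤ k) (p : ℕ) (F : ℝ → ℝ) (ε x y : ℝ) :
    odeRhs k p (J2 k p F) ε (-x) y = -odeRhs k p F ε x y := by
  have hsign : (-1 : ℝ) ^ (p + k - 1) * (-1) ^ (p + k) = -1 := by
    rw [← pow_add]
    exact Odd.neg_one_pow ⟨p + k - 1, by omega⟩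
  rw [odeRhs, odeRhs, mul_neg, AfunR_J2_neg, BfunR_J2_neg, Odd.neg_pow ⟨k - 1, by omega⟩,
    neg_pow x]
  linear_combination -(ε ^ p * y * x ^ (p + k - 1) * BfunR k p F (ε * x)) * hsign

lemma AnalyticAt.J2 {k p : ℕ} {F : ℝ → ℝ} {x : ℝ} (hF : AnalyticAt ℝ F (-x)) :
    AnalyticAt ℝ (J2 k p F) x :=
  analyticAt_const.mul (hF.comp analyticAt_id.neg)

lemma HasDerivWithinAt.comp_neg_Icc {g : ℝ → ℝ} {g' η x : ℝ}
    (hg : HasDerivWithinAt g g' (Icc 0 η) (-x)) :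
    HasDerivWithinAt (fun t => g (-t)) (-g') (Icc (-η) 0) x := by
  have hmaps : MapsTo (fun t : ℝ => -t) (Icc (-η) 0) (Icc 0 η) :=
    fun t ht => ⟨by linarith [ht.2], by linarith [ht.1]⟩
  exact hg.comp_of_eq x (hasDerivAt_neg x).hasDerivWithinAt hmaps rfl |>.congr_deriv (by ring)

lemma AnalyticAt.exists_abs_le_of_abs_le {G : ℝ → ℝ} (hG : AnalyticAt ℝ G 0) :
    ∃ r ∈ Ioc (0 : ℝ) 1, ∃ M, ∀ z, |z| ≤ r → |G z| ≤ M ∧ |deriv G z| ≤ M := by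
  have hcont : ContinuousAt (fun z => max |G z| |deriv G z|) 0 :=
    hG.continuousAt.abs.max hG.deriv.continuousAt.abs
  obtain ⟨δ, hδ, hball⟩ :=
    Metric.eventually_nhds_iff.1 (hcont.eventually_lt continuousAt_const (lt_add_one _))
  refine ⟨min (δ / 2) 1, ⟨by positivity, min_le_right _ _⟩, max |G 0| |deriv G 0| + 1,
    fun z hz => ?_⟩
  refine max_le_iff.1 (hball ?_).le
  rw [Real.dist_eq, sub_zero]
  linarith [min_le_left (δ / 2) 1]

lemma abs_odeRhs_add_le {k p : ℕ} (hp : 1 ≤ p) {G : ℝ → ℝ} {r M : ℝ} (hr : r ≤ 1)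
    (hM : ∀ z, |z| ≤ r → |G z| ≤ M ∧ |deriv G z| ≤ M) {ε t y : ℝ} (hε : |ε| ≤ r / 2)
    (ht : t ∈ Icc (0 : ℝ) 2) (hy : 0 ≤ y) :
    |odeRhs k p G ε t y + 2 * k * t ^ (2 * k - 1)|
      ≤ |ε| * (4 * k * 2 ^ (2 * k - 1) * M ^ 2
        + 2 ^ (p + k - 1) * (2 * (1 + p + 2 * k) * M) * y) := by
  have hεt : |ε * t| ≤ 2 * |ε| := by
    rw [abs_mul, abs_of_nonneg ht.1, mul_comm]
    exact mul_le_mul_of_nonneg_right ht.2 (abs_nonneg ε)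
  have hεt_r : |ε * t| ≤ r := by linarith
  have hεt_one : |ε * t| ≤ 1 := hεt_r.trans hr
  have hε_one : |ε| ≤ 1 := by linarith [abs_nonneg (ε * t)]
  obtain ⟨hGz, hG'z⟩ := hM _ hεt_r
  have hM0 : 0 ≤ M := (abs_nonneg _).trans hGz
  have hB : |BfunR k p G (ε * t)| ≤ 2 * (1 + p + 2 * k) * M := by
    have h1 : |2 * (ε * t) * deriv G (ε * t)| ≤ 2 * M := by
      rw [abs_mul, abs_mul, abs_two, mul_assoc]
      gcongr
      nlinarith [abs_nonneg (ε * t), abs_nonneg (deriv G (ε * t))]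
    have h2 : |2 * ((p : ℝ) + 2 * k) * G (ε * t)| ≤ 2 * (p + 2 * k) * M := by
      rw [abs_mul, abs_of_nonneg (by positivity : (0 : ℝ) ≤ 2 * (p + 2 * k))]
      gcongr
    calc |BfunR k p G (ε * t)| ≤ _ := abs_add_le _ _
      _ ≤ 2 * M + 2 * (p + 2 * k) * M := add_le_add h1 h2
      _ = _ := by ring
  have hA : |2 * k * t ^ (2 * k - 1) * ((ε * t) ^ (2 * p) * G (ε * t) ^ 2)|
      ≤ |ε| * (4 * k * 2 ^ (2 * k - 1) * M ^ 2) := by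
    have hpow : (ε * t) ^ (2 * p) ≤ 2 * |ε| := by
      rw [← (even_two_mul p).pow_abs]
      exact (pow_le_of_le_one (abs_nonneg _) hεt_one (by omega)).trans hεt
    have hG2 : G (ε * t) ^ 2 ≤ M ^ 2 := by
      rw [← sq_abs]
      gcongr
    have hpow0 : 0 ≤ (ε * t) ^ (2 * p) := (even_two_mul p).pow_nonneg _
    rw [abs_of_nonneg (by have := ht.1; positivity)]
    calc 2 * k * t ^ (2 * k - 1) * ((ε * t) ^ (2 * p) * G (ε * t) ^ 2)
        ≤ 2 * k * 2 ^ (2 * k - 1) * (2 * |ε| * M ^ 2) := by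
          gcongr <;> first | exact ht.2 | exact ht.1
      _ = _ := by ring
  have hY : |ε ^ p * y * t ^ (p + k - 1) * BfunR k p G (ε * t)|
      ≤ |ε| * (2 ^ (p + k - 1) * (2 * (1 + p + 2 * k) * M) * y) := by
    have hpow : |ε| ^ p ≤ |ε| := pow_le_of_le_one (abs_nonneg _) hε_one (by omega)
    rw [abs_mul, abs_mul, abs_mul, abs_pow, abs_pow, abs_of_nonneg hy, abs_of_nonneg ht.1]
    calc |ε| ^ p * y * t ^ (p + k - 1) * |BfunR k p G (ε * t)|
        ≤ |ε| * y * 2 ^ (p + k - 1) * (2 * (1 + p + 2 * k) * M) := by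
          gcongr <;> first | exact ht.2 | exact ht.1 | exact pow_nonneg ht.1 _
      _ = _ := by ring
  have hsplit : odeRhs k p G ε t y + 2 * k * t ^ (2 * k - 1)
      = -(2 * k * t ^ (2 * k - 1) * ((ε * t) ^ (2 * p) * G (ε * t) ^ 2))
        - ε ^ p * y * t ^ (p + k - 1) * BfunR k p G (ε * t) := by
    unfold odeRhs AfunR
    ring
  rw [hsplit, mul_add]
  exact (abs_sub _ _).trans (by rw [abs_neg]; exact add_le_add hA hY)

lemma exists_abs_odeRhs_add_le {k p : ℕ} (hp : 1 ≤ p) {G : ℝ → ℝ} (hG : AnalyticAt ℝ G 0) :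
    ∃ r > (0 : ℝ), ∃ K > (0 : ℝ), ∀ ε t y : ℝ, |ε| ≤ r → t ∈ Icc (0 : ℝ) 2 → 0 ≤ y →
      |odeRhs k p G ε t y + 2 * k * t ^ (2 * k - 1)| ≤ |ε| * K * (1 + y) := by
  obtain ⟨r, ⟨hr0, hr1⟩, M, hM⟩ := hG.exists_abs_le_of_abs_le
  have hM0 : 0 ≤ M := (abs_nonneg _).trans (hM 0 (by simpa using hr0.le)).1
  set K₁ : ℝ := 4 * k * 2 ^ (2 * k - 1) * M ^ 2
  set K₂ : ℝ := 2 ^ (p + k - 1) * (2 * (1 + p + 2 * k) * M)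
  have hK₁ : 0 ≤ K₁ := by positivity
  have hK₂ : 0 ≤ K₂ := by positivity
  refine ⟨r / 2, by positivity, K₁ + K₂ + 1, by positivity, fun ε t y hε ht hy => ?_⟩
  calc _ ≤ |ε| * (K₁ + K₂ * y) := abs_odeRhs_add_le hp hr1 hM hε ht hy
    _ ≤ |ε| * ((K₁ + K₂ + 1) * (1 + y)) := mul_le_mul_of_nonneg_left (by nlinarith) (abs_nonneg ε)
    _ = |ε| * (K₁ + K₂ + 1) * (1 + y) := by ring

lemma abs_sub_pow_sub_le_of_hasDerivWithinAt {g v : ℝ → ℝ} {n : ℕ} {η L s : ℝ}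
    (hg : ∀ t ∈ Icc 0 η, HasDerivWithinAt g (v t) (Icc 0 η) t) (hgη : g η = 0)
    (hv : ∀ t ∈ Icc 0 η, |v t + n * t ^ (n - 1)| ≤ L) (hs : s ∈ Icc 0 η) :
    |g s - (η ^ n - s ^ n)| ≤ L * (η - s) := by
  have hu : ∀ t ∈ Icc 0 η, HasDerivWithinAt (fun t => g t - (η ^ n - t ^ n))
      (v t + n * t ^ (n - 1)) (Icc 0 η) t := fun t ht =>
    ((hg t ht).sub ((hasDerivAt_pow n t).const_sub (η ^ n)).hasDerivWithinAt).congr_deriv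
      (sub_neg_eq_add _ _)
  have hη : η ∈ Icc 0 η := ⟨hs.1.trans hs.2, le_rfl⟩
  have := (convex_Icc 0 η).norm_image_sub_le_of_norm_hasDerivWithin_le hu hv hs hη
  rwa [hgη, sub_self, sub_zero, zero_sub, Real.norm_eq_abs, Real.norm_eq_abs, abs_neg,
    abs_of_nonneg (sub_nonneg.2 hs.2)] at this

lemma le_add_one_of_forall_sq_le {s : Set ℝ} (hs : IsCompact s) (hne : s.Nonempty)
    {φ : ℝ → ℝ} (hcont : ContinuousOn (fun t => φ t ^ 2) s) (hφ : ∀ t ∈ s, 0 ≤ φ t)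
    {A : ℝ} (hA : 0 ≤ A) (h : ∀ Φ, (∀ t ∈ s, φ t ≤ Φ) → ∀ t ∈ s, φ t ^ 2 ≤ A + Φ) :
    ∀ t ∈ s, φ t ≤ A + 1 := by
  obtain ⟨t₀, ht₀, hmax⟩ := hs.exists_isMaxOn hne hcont
  have hle : ∀ t ∈ s, φ t ≤ φ t₀ := fun t ht =>
    (pow_le_pow_iff_left₀ (hφ t ht) (hφ t₀ ht₀) two_ne_zero).1 (hmax ht)
  have h₀ := h (φ t₀) hle t₀ ht₀
  intro t ht
  nlinarith [hle t ht, hφ t₀ ht₀]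

/-- The factor `2 ^ n + 3` is `1 + sup φ`, using the a priori bound `φ ≤ 2 ^ n + 2`
that `δ ≤ 1/2` allows. -/
lemma abs_sq_sub_pow_sub_le {φ v : ℝ → ℝ} {n : ℕ} {η δ s : ℝ} (hη : η ≤ 2) (hδ : 0 ≤ δ)
    (hδ_half : δ ≤ 1 / 2)
    (hφ' : ∀ t ∈ Icc 0 η, HasDerivWithinAt (fun t => φ t ^ 2) (v t) (Icc 0 η) t)
    (hφη : φ η = 0) (hφ : ∀ t ∈ Icc 0 η, 0 ≤ φ t)
    (hv : ∀ t ∈ Icc 0 η, |v t + n * t ^ (n - 1)| ≤ δ * (1 + φ t)) (hs : s ∈ Icc 0 η) :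
    |φ s ^ 2 - (η ^ n - s ^ n)| ≤ δ * (2 ^ n + 3) * (η - s) := by
  have hη0 : 0 ≤ η := hs.1.trans hs.2
  have hcomp : ∀ Φ, (∀ t ∈ Icc 0 η, φ t ≤ Φ) → ∀ s ∈ Icc 0 η,
      |φ s ^ 2 - (η ^ n - s ^ n)| ≤ δ * (1 + Φ) * (η - s) := fun Φ hΦ s hs =>
    abs_sub_pow_sub_le_of_hasDerivWithinAt hφ' (by simp [hφη])
      (fun t ht => (hv t ht).trans (by gcongr; exact hΦ t ht)) hs
  have hbdd : ∀ t ∈ Icc 0 η, φ t ≤ 2 ^ n + 1 + 1 := by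
    refine le_add_one_of_forall_sq_le isCompact_Icc ⟨η, hη0, le_rfl⟩
      (fun t ht => (hφ' t ht).continuousWithinAt) hφ (by positivity) fun Φ hΦ t ht => ?_
    have h1 := (le_abs_self _).trans (hcomp Φ hΦ t ht)
    have h2 : η ^ n ≤ 2 ^ n := pow_le_pow_left₀ hη0 hη n
    have h3 : 0 ≤ t ^ n := pow_nonneg ht.1 n
    have h4 : 0 ≤ 1 + Φ := by linarith [hφ t ht, hΦ t ht]
    have h5 : δ * (1 + Φ) * (η - t) ≤ 1 + Φ := by
      nlinarith [mul_le_mul_of_nonneg_left (by linarith [ht.1] : η - t ≤ 2) (mul_nonneg hδ h4)]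
    linarith
  calc _ ≤ δ * (1 + (2 ^ n + 1 + 1)) * (η - s) := hcomp _ hbdd s hs
    _ = δ * (2 ^ n + 3) * (η - s) := by ring

lemma pow_mul_sub_le_pow_succ_sub_pow_succ {x y : ℝ} (hy : 0 ≤ y) (hyx : y ≤ x) (n : ℕ) :
    x ^ n * (x - y) ≤ x ^ (n + 1) - y ^ (n + 1) := by
  have := mul_le_mul_of_nonneg_right (pow_le_pow_left₀ hy hyx n) hy
  rw [pow_succ, pow_succ]
  linarith

lemma abs_sub_sqrt_mul_sqrt_le {φ h : ℝ} (hφ : 0 ≤ φ) (hh : 0 ≤ h) :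
    |φ - √h| * √h ≤ |φ ^ 2 - h| := by
  have hfactor : φ ^ 2 - h = (φ - √h) * (φ + √h) := by
    linear_combination Real.sq_sqrt hh
  rw [hfactor, abs_mul, abs_of_nonneg (by positivity : 0 ≤ φ + √h)]
  exact mul_le_mul_of_nonneg_left (by linarith) (abs_nonneg _)

lemma abs_sub_sqrt_le {φ h L d c : ℝ} (hφ : 0 ≤ φ) (hc : 0 < c) (hd : 0 ≤ d) (hL : 0 ≤ L)
    (hφh : |φ ^ 2 - h| ≤ L * d) (hdh : c * d ≤ h) : |φ - √h| ≤ L * √(d / c) := by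
  rcases hd.eq_or_lt with rfl | hd
  · have : φ ^ 2 = h := by simpa [sub_eq_zero] using hφh
    rw [← this, Real.sqrt_sq hφ]
    simp
  have hcd : √(d / c) * √(c * d) = d := by
    rw [← Real.sqrt_mul (by positivity), show d / c * (c * d) = d * d by field_simp,
      Real.sqrt_mul_self hd.le]
  have hh : 0 < h := lt_of_lt_of_le (by positivity) hdh
  refine le_of_mul_le_mul_right ?_ (Real.sqrt_pos.2 hh)
  calc |φ - √h| * √h ≤ |φ ^ 2 - h| := abs_sub_sqrt_mul_sqrt_le hφ hh.le
    _ ≤ L * d := hφh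
    _ = L * √(d / c) * √(c * d) := by rw [mul_assoc, hcd]
    _ ≤ L * √(d / c) * √h := by gcongr

lemma SolFam.exists_abs_sub_sqrt_le {k p : ℕ} (hk : 1 ≤ k) (hp : 1 ≤ p) {G : ℝ → ℝ}
    (hG : AnalyticAt ℝ G 0) {ε₀ η₀ : ℝ} (hε₀ : 0 < ε₀) (hη₀ : η₀ ∈ Ioo (0 : ℝ) 1)
    {φ : ℝ → ℝ → ℝ → ℝ} (hφ : SolFam k p G ε₀ η₀ φ) :
    ∃ C > (0 : ℝ), ∃ ε' > (0 : ℝ), ε' ≤ ε₀ ∧ ∀ ε η : ℝ, |ε| < ε' →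
      η ∈ Ioo (1 - η₀) (1 + η₀) → ∀ x ∈ Icc 0 η,
        |φ x ε η - √(η ^ (2 * k) - x ^ (2 * k))| ≤ C * |ε| := by
  obtain ⟨r, hr, K, hK, hrhs⟩ := exists_abs_odeRhs_add_le (k := k) hp hG
  set c := (1 - η₀) ^ (2 * k - 1)
  have hc : 0 < c := pow_pos (by linarith [hη₀.2]) _
  refine ⟨K * (2 ^ (2 * k) + 3) * √(2 / c), by positivity, min ε₀ (min r (1 / (2 * K))),
    by positivity, min_le_left _ _, fun ε η hε hη x hx => ?_⟩
  obtain ⟨hφη, hφ0, -, hφ'⟩ := hφ ε η (hε.trans_le (min_le_left _ _)) hη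
  have hεr : |ε| ≤ r := (hε.trans_le ((min_le_right _ _).trans (min_le_left _ _))).le
  have hεK : |ε| * K ≤ 1 / 2 := by
    have := (hε.trans_le ((min_le_right _ _).trans (min_le_right _ _))).le
    rw [le_div_iff₀ (by positivity)] at this
    linarith
  have hη2 : η ≤ 2 := by linarith [hη.2, hη₀.2]
  have hsq : |φ x ε η ^ 2 - (η ^ (2 * k) - x ^ (2 * k))|
      ≤ |ε| * K * (2 ^ (2 * k) + 3) * (η - x) :=
    abs_sq_sub_pow_sub_le (φ := fun t => φ t ε η) (v := fun t => odeRhs k p G ε t (φ t ε η))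
      hη2 (by positivity) hεK hφ' hφη hφ0
      (fun t ht => by
        push_cast
        exact hrhs ε t _ hεr ⟨ht.1, ht.2.trans hη2⟩ (hφ0 t ht)) hx
  have hlow : c * (η - x) ≤ η ^ (2 * k) - x ^ (2 * k) := by
    have hcη : c ≤ η ^ (2 * k - 1) := pow_le_pow_left₀ (by linarith [hη₀.2]) hη.1.le _
    calc c * (η - x) ≤ η ^ (2 * k - 1) * (η - x) := by gcongr; linarith [hx.2]
      _ ≤ η ^ (2 * k - 1 + 1) - x ^ (2 * k - 1 + 1) :=
        pow_mul_sub_le_pow_succ_sub_pow_succ hx.1 hx.2 _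
      _ = η ^ (2 * k) - x ^ (2 * k) := by rw [Nat.sub_add_cancel (by omega)]
  calc |φ x ε η - √(η ^ (2 * k) - x ^ (2 * k))|
      ≤ |ε| * K * (2 ^ (2 * k) + 3) * √((η - x) / c) :=
        abs_sub_sqrt_le (hφ0 x hx) hc (by linarith [hx.2]) (by positivity) hsq hlow
    _ ≤ |ε| * K * (2 ^ (2 * k) + 3) * √(2 / c) := by
        gcongr
        linarith [hx.1]
    _ = K * (2 ^ (2 * k) + 3) * √(2 / c) * |ε| := by ring

/-- If `φ_{J₂F}` is the solution family for `J₂F`, then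
`y₂(x) = φ_{J₂F}(−x; ε, η)`, defined for `x ∈ [−η,0]`, solves the original
equation `d(y²)/dx = −2k x^(2k−1) A_F(εx) − ε^p y x^(p+k−1) B_F(εx)`;
moreover `y₂(−η) = 0` and `y₂(x) = (η^(2k) − x^(2k))^(1/2) + O(ε)`. -/
theorem statement13 (k p : ℕ) (hk : 1 ≤ k) (hp : 1 ≤ p)
    (F : ℝ → ℝ) (hF : AnalyticAt ℝ F 0)
    (ε₀ η₀ : ℝ) (hε₀ : 0 < ε₀) (hη₀ : η₀ ∈ Set.Ioo (0:ℝ) 1)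
    (φ₂ : ℝ → ℝ → ℝ → ℝ)
    (hφ₂ : SolFam k p (J2 k p F) ε₀ η₀ φ₂) :
    (∀ ε η : ℝ, |ε| < ε₀ → η ∈ Set.Ioo (1 - η₀) (1 + η₀) →
      φ₂ (-(-η)) ε η = 0 ∧
      (∀ x ∈ Set.Icc (-η) (0:ℝ),
        HasDerivWithinAt (fun t => (φ₂ (-t) ε η) ^ 2)
          (-2 * k * x ^ (2 * k - 1) * AfunR p F (ε * x)
            - ε ^ p * φ₂ (-x) ε η * x ^ (p + k - 1) * BfunR k p F (ε * x))
          (Set.Icc (-η) 0) x)) ∧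
    (∃ C > (0:ℝ), ∃ ε' > (0:ℝ), ε' ≤ ε₀ ∧
      ∀ ε η : ℝ, |ε| < ε' → η ∈ Set.Ioo (1 - η₀) (1 + η₀) →
        ∀ x ∈ Set.Icc (-η) (0:ℝ),
          |φ₂ (-x) ε η - Real.sqrt (η ^ (2 * k) - x ^ (2 * k))| ≤ C * |ε|) := by
  have hneg : ∀ {η x : ℝ}, x ∈ Icc (-η) 0 → -x ∈ Icc 0 η :=
    fun hx => ⟨by linarith [hx.2], by linarith [hx.1]⟩
  refine ⟨fun ε η hε hη => ?_, ?_⟩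
  · obtain ⟨hφη, -, -, hφ'⟩ := hφ₂ ε η hε hη
    refine ⟨by rwa [neg_neg], fun x hx => ?_⟩
    have h : HasDerivWithinAt (fun t => φ₂ t ε η ^ 2)
        (odeRhs k p (J2 k p F) ε (-x) (φ₂ (-x) ε η)) (Icc 0 η) (-x) := hφ' (-x) (hneg hx)
    have := h.comp_neg_Icc
    rwa [odeRhs_J2_neg hk, neg_neg] at this
  · obtain ⟨C, hC, ε', hε', hε'₀, hbound⟩ :=
      hφ₂.exists_abs_sub_sqrt_le hk hp (AnalyticAt.J2 (by rwa [neg_zero])) hε₀ hη₀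
    refine ⟨C, hC, ε', hε', hε'₀, fun ε η hε hη x hx => ?_⟩
    simpa [(even_two_mul k).neg_pow] using hbound ε η hε hη (-x) (hneg hx)
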